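/- arXiv:2604.15457 — 3 statements merged into one kernel-verified Lean document; each statement's English description precedes it below -/
import Mathlib

section
/- Let m(s) = f0 + s·g + (1/2) sᵀ H s be a quadratic model, and suppose s* satisfies (H + ν I + ℓ I) s* = -g with H + ν I + ℓ I ⪰ 0 and ℓ ≥ 0, where ν = √(Λ‖g‖) and ‖g‖ = 16 Λ Δ² for some Λ, Δ > 0. Then m(0) - m(s*) ≥ 2 Λ Δ ‖s*‖². -/
/-!
Pairing the stationarity equation with `s*` gives `⟪s*, g⟫ = -(⟪s*, H s*⟫ + σ‖s*‖²)` with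
`σ = ν + ℓ`, so the decrease `m 0 - m s*` equals `½ (⟪s*, H s*⟫ + σ‖s*‖²) + ½ σ‖s*‖²`.
The first term is nonnegative by positive semidefiniteness, and `σ ≥ ν = 4ΛΔ`.
-/

open scoped RealInnerProductSpace

section ShiftedNewtonStep

variable {E : Type*} [NormedAddCommGroup E] [InnerProductSpace ℝ E]

lemma inner_eq_neg_of_add_smul_eq_neg {H : E → E} {g s : E} {σ : ℝ}
    (hstat : H s + σ • s = -g) : ⟪s, g⟫ = -(⟪s, H s⟫ + σ * ‖s‖ ^ 2) := by
  have h := congrArg (fun v => ⟪s, v⟫) hstat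
  simp only [inner_add_right, inner_smul_right, inner_neg_right,
    real_inner_self_eq_norm_sq] at h
  linarith

lemma half_mul_norm_sq_le_model_decrease {H : E → E} {g s : E} {σ : ℝ}
    (hstat : H s + σ • s = -g) (hpsd : 0 ≤ ⟪s, H s⟫ + σ * ‖s‖ ^ 2) :
    σ / 2 * ‖s‖ ^ 2 ≤ -(⟪s, g⟫ + 1 / 2 * ⟪s, H s⟫) := by
  rw [inner_eq_neg_of_add_smul_eq_neg hstat]
  linarith

end ShiftedNewtonStep

lemma sqrt_mul_sixteen_mul_sq {Λ Δ : ℝ} (hΛ : 0 < Λ) (hΔ : 0 < Δ) :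
    Real.sqrt (Λ * (16 * Λ * Δ ^ 2)) = 4 * Λ * Δ := by
  rw [show Λ * (16 * Λ * Δ ^ 2) = (4 * Λ * Δ) ^ 2 by ring]
  exact Real.sqrt_sq (by positivity)

theorem stmt0_general {d : ℕ} (g : EuclideanSpace ℝ (Fin d))
    (H : EuclideanSpace ℝ (Fin d) →L[ℝ] EuclideanSpace ℝ (Fin d))
    (Λ Δ ℓ ν f0 : ℝ) (hΛ : 0 < Λ) (hΔ : 0 < Δ) (hℓ : 0 ≤ ℓ)
    (hν : ν = Real.sqrt (Λ * ‖g‖)) (hg : ‖g‖ = 16 * Λ * Δ ^ 2)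
    (m : EuclideanSpace ℝ (Fin d) → ℝ)
    (hm : ∀ s, m s = f0 + ⟪s, g⟫ + (1 / 2) * ⟪s, H s⟫)
    (sstar : EuclideanSpace ℝ (Fin d))
    (hstat : H sstar + ν • sstar + ℓ • sstar = -g)
    (hpsd : ∀ v : EuclideanSpace ℝ (Fin d), 0 ≤ ⟪v, H v⟫ + ν * ‖v‖ ^ 2 + ℓ * ‖v‖ ^ 2) :
    m 0 - m sstar ≥ 2 * Λ * Δ * ‖sstar‖ ^ 2 := by
  have hν_eq : ν = 4 * Λ * Δ := by rw [hν, hg, sqrt_mul_sixteen_mul_sq hΛ hΔ]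
  have hshifted : H sstar + (ν + ℓ) • sstar = -g := by rwa [add_smul, ← add_assoc]
  have hdecrease := half_mul_norm_sq_le_model_decrease hshifted (by linarith [hpsd sstar])
  have hm0 : m 0 = f0 := by simp [hm]
  rw [hm0, hm]
  rw [hν_eq] at hdecrease
  nlinarith [mul_nonneg hℓ (sq_nonneg ‖sstar‖)]

theorem stmt0 {d : ℕ} (g : EuclideanSpace ℝ (Fin d))
    (H : EuclideanSpace ℝ (Fin d) →L[ℝ] EuclideanSpace ℝ (Fin d))
    (hsymm : ∀ u v : EuclideanSpace ℝ (Fin d), ⟪H u, v⟫ = ⟪u, H v⟫)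
    (Λ Δ ℓ ν f0 : ℝ) (hΛ : 0 < Λ) (hΔ : 0 < Δ) (hℓ : 0 ≤ ℓ)
    (hν : ν = Real.sqrt (Λ * ‖g‖)) (hg : ‖g‖ = 16 * Λ * Δ ^ 2)
    (m : EuclideanSpace ℝ (Fin d) → ℝ)
    (hm : ∀ s, m s = f0 + ⟪s, g⟫ + (1 / 2) * ⟪s, H s⟫)
    (sstar : EuclideanSpace ℝ (Fin d))
    (hstat : H sstar + ν • sstar + ℓ • sstar = -g)
    (hpsd : ∀ v : EuclideanSpace ℝ (Fin d), 0 ≤ ⟪v, H v⟫ + ν * ‖v‖ ^ 2 + ℓ * ‖v‖ ^ 2) :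
    m 0 - m sstar ≥ 2 * Λ * Δ * ‖sstar‖ ^ 2 :=
  stmt0_general g H Λ Δ ℓ ν f0 hΛ hΔ hℓ hν hg m hm sstar hstat hpsd
end

section
/- Let f : ℝᵈ → ℝ be C² with L_H-Lipschitz Hessian, and fix x ∈ ℝᵈ, Δ > 0. Define the forward-difference Hessian H with j-th column H eⱼ = (Ĝⱼ - Ĝ₀)/Δ, where Ĝ₀ = ∇f(x) + E₀ and Ĝⱼ = ∇f(x + Δ eⱼ) + Eⱼ for error vectors E₀, E₁, …, E_d ∈ ℝᵈ. Then ‖∇²f(x) - H‖ ≤ √d ( (L_H/2) Δ + (max_{1≤j≤d} ‖Eⱼ - E₀‖)/Δ ). -/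
/-!
Each column of `H` is a forward difference quotient of `∇f` plus the error `(Eⱼ - E₀)/Δ`.
Comparing the Taylor remainder of `∇f` along `t ↦ x + t Δ eⱼ` with the parabola
`t ↦ L_H t² Δ² / 2` bounds the difference-quotient error of each column by `L_H Δ / 2`, so every
column of `∇²f(x) - H` has norm at most `L_H Δ / 2 + max ‖Eⱼ - E₀‖ / Δ`. Finally, writing
`u = ∑ uⱼ eⱼ` and using `∑ |uⱼ| ≤ √d ‖u‖` (Cauchy–Schwarz), an operator on `ℝᵈ` whose columns
have norm at most `C` has operator norm at most `√d C`.
-/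

open Set

section Taylor

variable {E F : Type*} [NormedAddCommGroup E] [NormedSpace ℝ E]
  [NormedAddCommGroup F] [NormedSpace ℝ F] {g : E → F} {L : ℝ}

lemma norm_sub_sub_fderiv_le_of_lipschitz_fderiv (hg : Differentiable ℝ g)
    (hlip : ∀ x₁ x₂, ‖fderiv ℝ g x₁ - fderiv ℝ g x₂‖ ≤ L * ‖x₁ - x₂‖) (x v : E) :
    ‖g (x + v) - g x - fderiv ℝ g x v‖ ≤ L / 2 * ‖v‖ ^ 2 := by
  have hremainder : ∀ t : ℝ,
      HasDerivAt (fun t : ℝ => g (x + t • v) - g x - t • fderiv ℝ g x v)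
        (fderiv ℝ g (x + t • v) v - fderiv ℝ g x v) t := by
    intro t
    have hline : HasDerivAt (fun t : ℝ => x + t • v) v t := by
      simpa using ((hasDerivAt_id t).smul_const v).const_add x
    exact (((hg _).hasFDerivAt.comp_hasDerivAt t hline).sub_const (g x)).sub
      (by simpa using (hasDerivAt_id t).smul_const (fderiv ℝ g x v))
  have hparabola : ∀ t : ℝ,
      HasDerivAt (fun t : ℝ => L / 2 * t ^ 2 * ‖v‖ ^ 2) (L * t * ‖v‖ ^ 2) t := by
    intro t
    exact (((hasDerivAt_pow 2 t).const_mul (L / 2)).mul_const (‖v‖ ^ 2)).congr_deriv (by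
      simp only [Nat.cast_ofNat, Nat.add_one_sub_one, pow_one]; ring)
  have hslope : ∀ t ∈ Ico (0 : ℝ) 1,
      ‖fderiv ℝ g (x + t • v) v - fderiv ℝ g x v‖ ≤ L * t * ‖v‖ ^ 2 := by
    intro t ht
    calc ‖fderiv ℝ g (x + t • v) v - fderiv ℝ g x v‖
        ≤ ‖fderiv ℝ g (x + t • v) - fderiv ℝ g x‖ * ‖v‖ :=
          (fderiv ℝ g (x + t • v) - fderiv ℝ g x).le_opNorm v
      _ ≤ L * ‖t • v‖ * ‖v‖ := by gcongr; simpa using hlip (x + t • v) x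
      _ = L * t * ‖v‖ ^ 2 := by rw [norm_smul, Real.norm_of_nonneg ht.1]; ring
  simpa using image_norm_le_of_norm_deriv_right_le_deriv_boundary
    (fun t _ => (hremainder t).continuousAt.continuousWithinAt)
    (fun t _ => (hremainder t).hasDerivWithinAt) (by simp) hparabola hslope
    (right_mem_Icc.2 zero_le_one)

lemma norm_fderiv_sub_forward_difference_le (hg : Differentiable ℝ g)
    (hlip : ∀ x₁ x₂, ‖fderiv ℝ g x₁ - fderiv ℝ g x₂‖ ≤ L * ‖x₁ - x₂‖) (x v : E)
    {Δ : ℝ} (hΔ : 0 < Δ) :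
    ‖fderiv ℝ g x v - Δ⁻¹ • (g (x + Δ • v) - g x)‖ ≤ L / 2 * Δ * ‖v‖ ^ 2 := by
  have hrewrite : fderiv ℝ g x v - Δ⁻¹ • (g (x + Δ • v) - g x) =
      -(Δ⁻¹ • (g (x + Δ • v) - g x - fderiv ℝ g x (Δ • v))) := by
    rw [map_smul, smul_sub _ (g (x + Δ • v) - g x), smul_smul, inv_mul_cancel₀ hΔ.ne', one_smul]
    abel
  rw [hrewrite, norm_neg, norm_smul, Real.norm_of_nonneg (inv_nonneg.2 hΔ.le)]
  calc Δ⁻¹ * ‖g (x + Δ • v) - g x - fderiv ℝ g x (Δ • v)‖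
      ≤ Δ⁻¹ * (L / 2 * ‖Δ • v‖ ^ 2) := by
        gcongr; exact norm_sub_sub_fderiv_le_of_lipschitz_fderiv hg hlip x (Δ • v)
    _ = L / 2 * Δ * ‖v‖ ^ 2 := by
        rw [norm_smul, Real.norm_of_nonneg hΔ.le]; field_simp

end Taylor

lemma ContDiff.differentiable_gradient {E : Type*} [NormedAddCommGroup E]
    [InnerProductSpace ℝ E] [CompleteSpace E] {f : E → ℝ} (hf : ContDiff ℝ 2 f) :
    Differentiable ℝ (gradient f) :=
  (InnerProductSpace.toDual ℝ E).symm.toContinuousLinearEquiv.differentiable.comp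
    ((hf.fderiv_right (m := 1) (by norm_num)).differentiable one_ne_zero)

section Columns

variable {ι F : Type*} [Fintype ι] [NormedAddCommGroup F] [NormedSpace ℝ F]

lemma EuclideanSpace.sum_abs_le_sqrt_card_mul_norm (u : EuclideanSpace ℝ ι) :
    ∑ i, |u i| ≤ √(Fintype.card ι) * ‖u‖ := by
  simpa [EuclideanSpace.norm_eq, sq_abs] using
    Real.sum_mul_le_sqrt_mul_sqrt Finset.univ (fun _ => (1 : ℝ)) (fun i => |u i|)

lemma ContinuousLinearMap.opNorm_le_sqrt_card_mul_of_norm_apply_single_le [DecidableEq ι]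
    (T : EuclideanSpace ℝ ι →L[ℝ] F) {C : ℝ}
    (hcol : ∀ i, ‖T (EuclideanSpace.single i 1)‖ ≤ C) :
    ‖T‖ ≤ √(Fintype.card ι) * C := by
  rcases isEmpty_or_nonempty ι with hι | ⟨⟨i₀⟩⟩
  · simp [Subsingleton.elim T 0]
  have hC : 0 ≤ C := (norm_nonneg _).trans (hcol i₀)
  refine T.opNorm_le_bound (by positivity) fun u => ?_
  have hexpand : T u = ∑ i, u i • T (EuclideanSpace.single i 1) := by
    conv_lhs => rw [← (EuclideanSpace.basisFun ι ℝ).sum_repr u]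
    simp
  calc ‖T u‖ ≤ ∑ i, |u i| * C := by
        rw [hexpand]
        refine norm_sum_le_of_le _ fun i _ => ?_
        rw [norm_smul, Real.norm_eq_abs]
        gcongr
        exact hcol i
    _ = (∑ i, |u i|) * C := Finset.sum_mul _ _ _ |>.symm
    _ ≤ √(Fintype.card ι) * ‖u‖ * C := by
        gcongr; exact EuclideanSpace.sum_abs_le_sqrt_card_mul_norm u
    _ = √(Fintype.card ι) * C * ‖u‖ := by ring

end Columns

theorem stmt3_general {d : ℕ}
    (f : EuclideanSpace ℝ (Fin d) → ℝ) (LH Δ : ℝ)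
    (hf : ContDiff ℝ 2 f) (hΔ : 0 < Δ)
    (hlip : ∀ x₁ x₂ : EuclideanSpace ℝ (Fin d),
      ‖fderiv ℝ (gradient f) x₁ - fderiv ℝ (gradient f) x₂‖ ≤ LH * ‖x₁ - x₂‖)
    (x E0 : EuclideanSpace ℝ (Fin d)) (Err : Fin d → EuclideanSpace ℝ (Fin d))
    (H : EuclideanSpace ℝ (Fin d) →L[ℝ] EuclideanSpace ℝ (Fin d))
    (hH : ∀ j : Fin d, H (EuclideanSpace.single j 1) =
      Δ⁻¹ • ((gradient f (x + Δ • EuclideanSpace.single j 1) + Err j) -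
        (gradient f x + E0))) :
    ‖fderiv ℝ (gradient f) x - H‖ ≤
      Real.sqrt d * (LH / 2 * Δ + sSup (Set.range fun j => ‖Err j - E0‖) / Δ) := by
  set D := fderiv ℝ (gradient f) x
  set M := sSup (Set.range fun j => ‖Err j - E0‖)
  have hM : ∀ j, ‖Err j - E0‖ ≤ M := fun j => le_csSup (finite_range _).bddAbove ⟨j, rfl⟩
  have hcolumn : ∀ j, ‖(D - H) (EuclideanSpace.single j 1)‖ ≤ LH / 2 * Δ + M / Δ := by
    intro j
    set e := EuclideanSpace.single j (1 : ℝ)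
    have hcol : (D - H) e = (D e - Δ⁻¹ • (gradient f (x + Δ • e) - gradient f x)) -
        Δ⁻¹ • (Err j - E0) := by
      rw [sub_apply, hH j, sub_sub, ← smul_add]
      congr 2
      abel
    calc ‖(D - H) e‖
        ≤ ‖D e - Δ⁻¹ • (gradient f (x + Δ • e) - gradient f x)‖ + ‖Δ⁻¹ • (Err j - E0)‖ :=
          hcol ▸ norm_sub_le _ _
      _ ≤ LH / 2 * Δ * ‖e‖ ^ 2 + Δ⁻¹ * M := by
          gcongr
          · exact norm_fderiv_sub_forward_difference_le hf.differentiable_gradient hlip x e hΔ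
          · rw [norm_smul, Real.norm_of_nonneg (inv_nonneg.2 hΔ.le)]
            gcongr
            exact hM j
      _ = LH / 2 * Δ + M / Δ := by simp [e, div_eq_inv_mul]
  simpa using (D - H).opNorm_le_sqrt_card_mul_of_norm_apply_single_le hcolumn

theorem stmt3 {d : ℕ} (hd : 0 < d)
    (f : EuclideanSpace ℝ (Fin d) → ℝ) (LH Δ : ℝ)
    (hf : ContDiff ℝ 2 f) (hΔ : 0 < Δ)
    (hlip : ∀ x₁ x₂ : EuclideanSpace ℝ (Fin d),
      ‖fderiv ℝ (gradient f) x₁ - fderiv ℝ (gradient f) x₂‖ ≤ LH * ‖x₁ - x₂‖)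
    (x E0 : EuclideanSpace ℝ (Fin d)) (Err : Fin d → EuclideanSpace ℝ (Fin d))
    (H : EuclideanSpace ℝ (Fin d) →L[ℝ] EuclideanSpace ℝ (Fin d))
    (hH : ∀ j : Fin d, H (EuclideanSpace.single j 1) =
      Δ⁻¹ • ((gradient f (x + Δ • EuclideanSpace.single j 1) + Err j) -
        (gradient f x + E0))) :
    ‖fderiv ℝ (gradient f) x - H‖ ≤
      Real.sqrt d * (LH / 2 * Δ + sSup (Set.range fun j => ‖Err j - E0‖) / Δ) :=
  stmt3_general f LH Δ hf hΔ hlip x E0 Err H hH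
end

section
/- Let g ∈ ℝᵈ with g ≠ 0, H a d×d symmetric matrix with ‖H‖ ≤ κ_H, Λ > 0, Δ = √(‖g‖/(16Λ)), ℓ ≥ 0, ν = √(Λ‖g‖), and suppose s satisfies (H + νI + ℓI)s = -g with ℓ = 0. Then ‖s‖ ≥ 16ΛΔ² / (κ_H + 4ΛΔ). -/
/-! Substituting ν = 4ΛΔ and 16ΛΔ² = ‖g‖, the bound says ‖g‖ ≤ (κ_H + ν)‖s‖, which is the
triangle inequality for g = -(H s + ν s). -/

lemma norm_apply_add_smul_le {E : Type*} [NormedAddCommGroup E] [NormedSpace ℝ E]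
    (T : E →L[ℝ] E) {κ ν : ℝ} (hT : ‖T‖ ≤ κ) (hν : 0 ≤ ν) (s : E) :
    ‖T s + ν • s‖ ≤ (κ + ν) * ‖s‖ :=
  calc ‖T s + ν • s‖ ≤ ‖T s‖ + ‖ν • s‖ := norm_add_le _ _
    _ ≤ κ * ‖s‖ + ν * ‖s‖ := by
        gcongr
        · exact (T.le_opNorm s).trans (by gcongr)
        · rw [norm_smul, Real.norm_of_nonneg hν]
    _ = (κ + ν) * ‖s‖ := by ring

lemma four_mul_mul_sqrt_div_eq_sqrt_mul {Λ : ℝ} (hΛ : 0 < Λ) (a : ℝ) :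
    4 * Λ * √(a / (16 * Λ)) = √(Λ * a) := by
  rw [← Real.sqrt_sq (by positivity : 0 ≤ 4 * Λ), ← Real.sqrt_mul (by positivity)]
  congr 1
  field_simp
  ring

lemma sixteen_mul_mul_sqrt_div_sq {Λ a : ℝ} (hΛ : 0 < Λ) (ha : 0 ≤ a) :
    16 * Λ * √(a / (16 * Λ)) ^ 2 = a := by
  rw [Real.sq_sqrt (by positivity)]
  field_simp

open scoped RealInnerProductSpace

theorem stmt4_general {d : ℕ} (g s : EuclideanSpace ℝ (Fin d))
    (H : EuclideanSpace ℝ (Fin d) →L[ℝ] EuclideanSpace ℝ (Fin d))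
    (κH Λ Δ ℓ ν : ℝ) (hκ : ‖H‖ ≤ κH) (hΛ : 0 < Λ)
    (hΔ : Δ = Real.sqrt (‖g‖ / (16 * Λ))) (hℓ0 : ℓ = 0)
    (hν : ν = Real.sqrt (Λ * ‖g‖))
    (hstat : H s + ν • s + ℓ • s = -g) :
    ‖s‖ ≥ 16 * Λ * Δ ^ 2 / (κH + 4 * Λ * Δ) := by
  have hν_eq : 4 * Λ * Δ = ν := by
    rw [hΔ, hν, four_mul_mul_sqrt_div_eq_sqrt_mul hΛ ‖g‖]
  have hnum : 16 * Λ * Δ ^ 2 = ‖g‖ := by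
    rw [hΔ, sixteen_mul_mul_sqrt_div_sq hΛ (norm_nonneg g)]
  have hν_nonneg : 0 ≤ ν := hν ▸ Real.sqrt_nonneg _
  have hg_le : ‖g‖ ≤ (κH + ν) * ‖s‖ := by
    rw [← norm_neg g, ← hstat, hℓ0, zero_smul, add_zero]
    exact norm_apply_add_smul_le H hκ hν_nonneg s
  rw [hnum, hν_eq, ge_iff_le]
  exact div_le_of_le_mul₀ (by linarith [(norm_nonneg H).trans hκ]) (norm_nonneg s)
    (by rwa [mul_comm])

theorem stmt4 {d : ℕ} (g s : EuclideanSpace ℝ (Fin d)) (hg : g ≠ 0)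
    (H : EuclideanSpace ℝ (Fin d) →L[ℝ] EuclideanSpace ℝ (Fin d))
    (hsymm : ∀ u v : EuclideanSpace ℝ (Fin d), ⟪H u, v⟫ = ⟪u, H v⟫)
    (κH Λ Δ ℓ ν : ℝ) (hκ : ‖H‖ ≤ κH) (hΛ : 0 < Λ)
    (hΔ : Δ = Real.sqrt (‖g‖ / (16 * Λ))) (hℓ : 0 ≤ ℓ) (hℓ0 : ℓ = 0)
    (hν : ν = Real.sqrt (Λ * ‖g‖))
    (hstat : H s + ν • s + ℓ • s = -g) :
    ‖s‖ ≥ 16 * Λ * Δ ^ 2 / (κH + 4 * Λ * Δ) :=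
  stmt4_general g s H κH Λ Δ ℓ ν hκ hΛ hΔ hℓ0 hν hstat
end
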